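/- Let Φ be an IFS with λ_Φ < 1, a ∈ Ω_k, and ε ≥ 0. Define Ω^ε_{Φ,a} := ⋂_{m≥1} closure(⋃_{n≥m} ⋃_{ω ∈ I^{(n)}_{Φ,a}(ε)} {φ_ω(0)}). Then for every n ∈ ℕ, Ω^ε_{Φ,a} is covered by the finitely many closed intervals of length 2(1+2r_Φ)·λ_Φ^n centered at the points φ_ω(0) for ω ∈ I^{(n)}_{Φ,a}(ε). -/

import Mathlib

open Filter Set Topology
open scoped NNReal

noncomputable def pcIdx {k : ℕ} (hk : 2 ≤ k) (a : Fin (k-1) → ℝ) (x : ℝ) : Fin k :=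
  ⟨(Finset.univ.filter fun i => a i ≤ x).card, by
    have h := Finset.card_filter_le (Finset.univ : Finset (Fin (k-1))) (fun i => a i ≤ x)
    simp only [Finset.card_univ, Fintype.card_fin] at h
    omega⟩

/-- The piecewise contraction `f_{Φ,a}` determined by the IFS `φ` and partition points `a`. -/
noncomputable def pc {k : ℕ} (hk : 2 ≤ k) (φ : Fin k → ℝ → ℝ) (a : Fin (k-1) → ℝ) (x : ℝ) : ℝ :=
  φ (pcIdx hk a x) x

/-- `φ_ω = φ_{ω_n} ∘ ⋯ ∘ φ_{ω_1}`. -/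
def wcomp {k : ℕ} (φ : Fin k → ℝ → ℝ) {n : ℕ} (ω : Fin n → Fin k) (x : ℝ) : ℝ :=
  (List.ofFn ω).foldl (fun y i => φ i y) x

/-- `(Φ,a)` has a singular connection: `φ_ω(S_a) ∩ S_a ≠ ∅` for some nonempty word `ω`. -/
def hasSingConn {k : ℕ} (φ : Fin k → ℝ → ℝ) (a : Fin (k-1) → ℝ) : Prop :=
  ∃ n : ℕ, ∃ ω : Fin (n+1) → Fin k, ∃ i j : Fin (k-1), wcomp φ ω (a i) = a j

/-- `max_i |z i|`. -/
noncomputable def maxAbs {k : ℕ} (hk : 2 ≤ k) (z : Fin k → ℝ) : ℝ :=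
  Finset.univ.sup' (Finset.univ_nonempty_iff.mpr ⟨⟨0, by omega⟩⟩) fun i => |z i|

/-- The set of itineraries of order `n` of `(Φ,a)`. -/
noncomputable def itin {k : ℕ} (hk : 2 ≤ k) (φ : Fin k → ℝ → ℝ) (a : Fin (k-1) → ℝ) (n : ℕ) :
    Set (Fin n → Fin k) :=
  {ω | ∃ x : ℝ, (∀ j < n, (pc hk φ a)^[j] x ∉ Set.range a) ∧
       ∀ j : Fin n, ω j = pcIdx hk a ((pc hk φ a)^[(j : ℕ)] x)}

/-- `I^{(n)}_{Φ,a}(ε) = ⋃_{|δ| ≤ ε} I^{(n)}_{Φ,a+δ}`. -/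
noncomputable def itinE {k : ℕ} (hk : 2 ≤ k) (φ : Fin k → ℝ → ℝ) (a : Fin (k-1) → ℝ)
    (ε : ℝ) (n : ℕ) : Set (Fin n → Fin k) :=
  {ω | ∃ δ : ℝ, |δ| ≤ ε ∧ ω ∈ itin hk φ (fun i => a i + δ) n}

/-- `Ω^ε_{Φ,a} = ⋂_{m ≥ 1} closure (⋃_{n ≥ m} ⋃_{ω ∈ I^{(n)}(ε)} {φ_ω(0)})`. -/
noncomputable def omegaSet {k : ℕ} (hk : 2 ≤ k) (φ : Fin k → ℝ → ℝ) (a : Fin (k-1) → ℝ)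
    (ε : ℝ) : Set ℝ :=
  ⋂ m : ℕ, closure {y : ℝ | ∃ n, m ≤ n ∧ ∃ ω ∈ itinE hk φ a ε n, wcomp φ ω 0 = y}

/-- The ω-limit set of `x` under `f`. -/
def omegaLimitPt (f : ℝ → ℝ) (x : ℝ) : Set ℝ :=
  {y | MapClusterPt y Filter.atTop fun n => f^[n] x}

/-- `f` is asymptotically periodic. -/
def AsympPeriodic (f : ℝ → ℝ) : Prop :=
  {x : ℝ | ∃ p : ℕ, 1 ≤ p ∧ f^[p] x = x}.Finite ∧
  ∀ x : ℝ, ∃ z : ℝ, ∃ p : ℕ, 1 ≤ p ∧ f^[p] z = z ∧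
    omegaLimitPt f x = Set.range fun j : Fin p => f^[(j : ℕ)] z

/-- `f` is asymptotically periodic on the invariant set `s`. -/
def AsympPeriodicOn (f : ℝ → ℝ) (s : Set ℝ) : Prop :=
  {x ∈ s | ∃ p : ℕ, 1 ≤ p ∧ f^[p] x = x}.Finite ∧
  ∀ x ∈ s, ∃ z : ℝ, ∃ p : ℕ, 1 ≤ p ∧ f^[p] z = z ∧
    omegaLimitPt f x = Set.range fun j : Fin p => f^[(j : ℕ)] z

/-!
Every point of `Ω^ε_{Φ,a}` is a limit of points `φ_ω(0)` with `ω` an `ε`-itinerary of some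
length `m + n`. The last `n` letters `ω'` of such a word form an `ε`-itinerary of length `n`
(start the orbit `m` steps later), and `φ_ω(0) = φ_{ω'}(φ_{ω''}(0))` for the first `m` letters
`ω''`. All maps `φ_i` preserve the ball of radius `r_Φ` about `0`, so `|φ_{ω''}(0)| ≤ r_Φ`, and
`φ_{ω'}` is `λ_Φ^n`-Lipschitz, whence `|φ_ω(0) - φ_{ω'}(0)| ≤ r_Φ λ_Φ^n`. The finite union of
the closed intervals is closed, so it also contains the limit points.
-/

open Metric

theorem lipschitzWith_list_foldl {ι α : Type*} [PseudoEMetricSpace α] {φ : ι → α → α}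
    {K : ℝ≥0} (hφ : ∀ i, LipschitzWith K (φ i)) (l : List ι) :
    LipschitzWith (K ^ l.length) fun x => l.foldl (fun y i => φ i y) x := by
  induction l with
  | nil => simp only [List.length_nil, pow_zero, List.foldl_nil]; exact LipschitzWith.id
  | cons i l ih => simpa [pow_succ, Function.comp_def] using ih.comp (hφ i)

theorem mapsTo_list_foldl {ι α : Type*} {φ : ι → α → α} {s : Set α}
    (hφ : ∀ i, MapsTo (φ i) s s) (l : List ι) :
    MapsTo (fun x => l.foldl (fun y i => φ i y) x) s s := by
  induction l with
  | nil => exact mapsTo_id s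
  | cons i l ih => exact ih.comp (hφ i)

theorem LipschitzWith.mapsTo_closedBall_of_isFixedPt {E : Type*} [SeminormedAddCommGroup E]
    {f : E → E} {K : ℝ≥0} (hf : LipschitzWith K f) (hK : K < 1) {z : E}
    (hz : Function.IsFixedPt f z) {M : ℝ} (hzM : ‖z‖ ≤ M) :
    MapsTo f (closedBall 0 ((1 + K) / (1 - K) * M)) (closedBall 0 ((1 + K) / (1 - K) * M)) := by
  set R := (1 + (K : ℝ)) / (1 - K) * M
  have hK' : (K : ℝ) < 1 := hK
  have hR : K * (R + M) + M = R := by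
    have : 1 - (K : ℝ) ≠ 0 := by linarith
    simp only [R]; field_simp; ring
  intro x hx
  rw [mem_closedBall_zero_iff] at hx ⊢
  have hfx : ‖f x - z‖ ≤ K * ‖x - z‖ := by
    have := hf.dist_le_mul x z
    rwa [hz.eq, dist_eq_norm, dist_eq_norm] at this
  calc ‖f x‖ ≤ ‖f x - z‖ + ‖z‖ := norm_le_norm_sub_add _ _
    _ ≤ K * (‖x‖ + ‖z‖) + ‖z‖ := by
      gcongr
      exact hfx.trans (by gcongr; exact _root_.norm_sub_le _ _)
    _ ≤ K * (R + M) + M := by gcongr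
    _ = R := hR

section Words

variable {k : ℕ} {φ : Fin k → ℝ → ℝ}

theorem wcomp_add {m n : ℕ} (ω : Fin (m + n) → Fin k) (x : ℝ) :
    wcomp φ ω x = wcomp φ (ω ∘ Fin.natAdd m) (wcomp φ (ω ∘ Fin.castAdd n) x) := by
  simp only [wcomp, List.ofFn_add, List.foldl_append]
  rfl

theorem lipschitzWith_wcomp {K : ℝ≥0} (hφ : ∀ i, LipschitzWith K (φ i)) {n : ℕ}
    (ω : Fin n → Fin k) : LipschitzWith (K ^ n) (wcomp φ ω) := by
  have h := lipschitzWith_list_foldl hφ (List.ofFn ω)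
  rwa [List.length_ofFn] at h

theorem mapsTo_wcomp {s : Set ℝ} (hφ : ∀ i, MapsTo (φ i) s s) {n : ℕ} (ω : Fin n → Fin k) :
    MapsTo (wcomp φ ω) s s :=
  mapsTo_list_foldl hφ (List.ofFn ω)

theorem dist_wcomp_wcomp_natAdd_le {K : ℝ≥0} (hφ : ∀ i, LipschitzWith K (φ i)) {m n : ℕ}
    (ω : Fin (m + n) → Fin k) (x : ℝ) :
    dist (wcomp φ ω x) (wcomp φ (ω ∘ Fin.natAdd m) x) ≤
      K ^ n * dist (wcomp φ (ω ∘ Fin.castAdd n) x) x := by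
  rw [wcomp_add ω x]
  exact_mod_cast (lipschitzWith_wcomp hφ _).dist_le_mul _ _

theorem itin_comp_natAdd {hk : 2 ≤ k} {a : Fin (k - 1) → ℝ} {m n : ℕ}
    {ω : Fin (m + n) → Fin k} (hω : ω ∈ itin hk φ a (m + n)) :
    ω ∘ Fin.natAdd m ∈ itin hk φ a n := by
  obtain ⟨x, hreg, hx⟩ := hω
  refine ⟨(pc hk φ a)^[m] x, fun j hj => ?_, fun j => ?_⟩
  · rw [← Function.iterate_add_apply]
    exact hreg _ (by omega)
  · rw [Function.comp_apply, hx, Fin.val_natAdd, add_comm m, Function.iterate_add_apply]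

theorem itinE_comp_natAdd {hk : 2 ≤ k} {a : Fin (k - 1) → ℝ} {ε : ℝ} {m n : ℕ}
    {ω : Fin (m + n) → Fin k} (hω : ω ∈ itinE hk φ a ε (m + n)) :
    ω ∘ Fin.natAdd m ∈ itinE hk φ a ε n :=
  let ⟨δ, hδ, hωδ⟩ := hω
  ⟨δ, hδ, itin_comp_natAdd hωδ⟩

end Words

theorem abs_le_maxAbs {k : ℕ} (hk : 2 ≤ k) (z : Fin k → ℝ) (i : Fin k) : |z i| ≤ maxAbs hk z :=
  Finset.le_sup' (fun i => |z i|) (Finset.mem_univ i)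

theorem stmt15_general {k : ℕ} (hk : 2 ≤ k) (φ : Fin k → ℝ → ℝ) (lam : ℝ≥0) (hlam : lam < 1)
    (hlip : ∀ i, LipschitzWith lam (φ i)) (z : Fin k → ℝ) (hz : ∀ i, φ i (z i) = z i)
    (r : ℝ) (hr : r = ((1 + (lam : ℝ)) / (1 - (lam : ℝ))) * maxAbs hk z)
    (a : Fin (k-1) → ℝ) (ε : ℝ) (n : ℕ) :
    omegaSet hk φ a ε ⊆
      ⋃ ω ∈ itinE hk φ a ε n,
        Set.Icc (wcomp φ ω 0 - (1 + 2*r) * (lam : ℝ)^n)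
                (wcomp φ ω 0 + (1 + 2*r) * (lam : ℝ)^n) := by
  have hball (i : Fin k) : MapsTo (φ i) (closedBall 0 r) (closedBall 0 r) :=
    hr ▸ (hlip i).mapsTo_closedBall_of_isFixedPt hlam (hz i) (abs_le_maxAbs hk z i)
  have hr0 : 0 ≤ r := by
    have : (lam : ℝ) < 1 := hlam
    rw [hr]
    exact mul_nonneg (by bound) ((abs_nonneg _).trans (abs_le_maxAbs hk z ⟨0, by omega⟩))
  intro y hy
  refine closure_minimal ?_ ((toFinite _).isClosed_biUnion fun _ _ => isClosed_Icc)
    (mem_iInter.1 hy n)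
  rintro _ ⟨N, hnN, ω, hω, rfl⟩
  obtain ⟨m, rfl⟩ := Nat.exists_eq_add_of_le' hnN
  refine mem_biUnion (itinE_comp_natAdd hω) ?_
  rw [← Real.closedBall_eq_Icc, mem_closedBall]
  have hhead : dist (wcomp φ (ω ∘ Fin.castAdd n) 0) 0 ≤ r :=
    mem_closedBall.1 (mapsTo_wcomp hball _ (mem_closedBall_self hr0))
  calc dist (wcomp φ ω 0) (wcomp φ (ω ∘ Fin.natAdd m) 0)
      ≤ lam ^ n * dist (wcomp φ (ω ∘ Fin.castAdd n) 0) 0 :=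
        dist_wcomp_wcomp_natAdd_le hlip ω 0
    _ ≤ lam ^ n * r := by gcongr
    _ ≤ (1 + 2 * r) * lam ^ n := by nlinarith [pow_nonneg lam.coe_nonneg n]

theorem stmt15 {k : ℕ} (hk : 2 ≤ k) (φ : Fin k → ℝ → ℝ) (lam : ℝ≥0) (hlam : lam < 1)
    (hlip : ∀ i, LipschitzWith lam (φ i)) (z : Fin k → ℝ) (hz : ∀ i, φ i (z i) = z i)
    (r : ℝ) (hr : r = ((1 + (lam : ℝ)) / (1 - (lam : ℝ))) * maxAbs hk z)
    (a : Fin (k-1) → ℝ) (ha : StrictMono a) (ε : ℝ) (hε : 0 ≤ ε) (n : ℕ) :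
    omegaSet hk φ a ε ⊆
      ⋃ ω ∈ itinE hk φ a ε n,
        Set.Icc (wcomp φ ω 0 - (1 + 2*r) * (lam : ℝ)^n)
                (wcomp φ ω 0 + (1 + 2*r) * (lam : ℝ)^n) :=
  stmt15_general hk φ lam hlam hlip z hz r hr a ε n
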